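/- arXiv:2403.17490 — 2 statements merged into one kernel-verified Lean document; each statement's English description precedes it below -/
import Mathlib

section
/- For the monomial bases: let b₀,…,b_r denote the canonical monomial basis of Sym^d(W*) and b₀*,…,b_r* its dual basis under the apolarity pairing D. Then for every f ∈ Sym^{kd}(W*), one has ((kd)!/d!^k) · f = ∑_{0 ≤ i₁,…,i_k ≤ r} D(b_{i₁}* ⋯ b_{i_k}*, f) · b_{i₁} ⋯ b_{i_k}. -/
open MvPolynomial

noncomputable section

def derivOp (K : Type*) [Field K] {σ : Type*} [Fintype σ] [DecidableEq σ]
    (a : σ →₀ ℕ) : Module.End K (MvPolynomial σ K) :=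
  (Finset.univ.toList.map fun j : σ => ((MvPolynomial.pderiv j).toLinearMap ^ (a j))).prod

def apol {K : Type*} [Field K] {σ : Type*} [Fintype σ] [DecidableEq σ]
    (u P : MvPolynomial σ K) : MvPolynomial σ K :=
  ∑ a ∈ u.support, u.coeff a • derivOp K a P

def apolS {K : Type*} [Field K] {σ : Type*} [Fintype σ] [DecidableEq σ]
    (u P : MvPolynomial σ K) : K :=
  MvPolynomial.constantCoeff (apol u P)

def MonIdx (m d : ℕ) : Type := {v : Fin m → ℕ // v ∈ Finset.Nat.antidiagonalTuple m d}

instance (m d : ℕ) : Fintype (MonIdx m d) := by unfold MonIdx; infer_instance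
instance (m d : ℕ) : DecidableEq (MonIdx m d) := by unfold MonIdx; infer_instance

def bmon (K : Type*) [Field K] {m d : ℕ} (v : MonIdx m d) : MvPolynomial (Fin m) K :=
  monomial (Finsupp.equivFunOnFinite.symm v.1) 1

/-- Dual basis of the monomial basis: `b_v* = (1/∏ v_j!) w^v`. -/
def bstarMon (K : Type*) [Field K] {m d : ℕ} (v : MonIdx m d) : MvPolynomial (Fin m) K :=
  (((∏ j, Nat.factorial (v.1 j) : ℕ) : K))⁻¹ • bmon K v

/-! Apolarity pairs monomials diagonally, `D(x^a, x^b) = a! δ_{ab}`, so for `f = x^b` the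
right-hand side is `b! · [x^b](∑_v b_v*)^k · x^b`. By the multinomial theorem
`d! ∑_{|v| = d} x^v / v! = (∑ x_i)^d`, hence `d!^k (∑_v b_v*)^k = (∑ x_i)^{kd}`, whose
`x^b`-coefficient is the multinomial coefficient `(kd)! / b!`. -/

open scoped Nat

section Apolarity

variable {K : Type*} [Field K] {σ : Type*}

lemma pderiv_pow_monomial (j : σ) (m : ℕ) (b : σ →₀ ℕ) (c : K) :
    ((pderiv j).toLinearMap ^ m) (monomial b c)
      = monomial (b - Finsupp.single j m) ((b j).descFactorial m * c) := by
  induction m with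
  | zero => simp
  | succ m ih =>
    rw [pow_succ', Module.End.mul_apply, ih, Derivation.coeFn_coe, pderiv_monomial,
      tsub_tsub, ← Finsupp.single_add, Finsupp.tsub_apply, Finsupp.single_eq_same,
      Nat.descFactorial_succ]
    push_cast
    ring_nf

lemma list_prod_pderiv_pow_monomial [DecidableEq σ] (a : σ →₀ ℕ) {L : List σ} (hL : L.Nodup)
    (b : σ →₀ ℕ) (c : K) :
    (L.map fun j => (pderiv j).toLinearMap ^ a j).prod (monomial b c)
      = monomial (b - ∑ j ∈ L.toFinset, Finsupp.single j (a j))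
          ((∏ j ∈ L.toFinset, (b j).descFactorial (a j) : ℕ) * c) := by
  induction L with
  | nil => simp
  | cons j L ih =>
    obtain ⟨hj, hL⟩ := List.nodup_cons.mp hL
    have hj' : j ∉ L.toFinset := by simpa using hj
    have hbj : (b - ∑ i ∈ L.toFinset, Finsupp.single i (a i)) j = b j := by
      simp [Finsupp.single_apply, hj]
    rw [List.map_cons, List.prod_cons, Module.End.mul_apply, ih hL, pderiv_pow_monomial, hbj,
      List.toFinset_cons, Finset.sum_insert hj', Finset.prod_insert hj', tsub_tsub, add_comm]
    push_cast
    ring_nf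

variable [Fintype σ] [DecidableEq σ]

lemma derivOp_monomial (a b : σ →₀ ℕ) (c : K) :
    derivOp K a (monomial b c)
      = monomial (b - a) ((∏ j, (b j).descFactorial (a j) : ℕ) * c) := by
  rw [derivOp, list_prod_pderiv_pow_monomial a (Finset.nodup_toList _), Finset.toList_toFinset,
    Finsupp.univ_sum_single]

lemma constantCoeff_derivOp_monomial (a b : σ →₀ ℕ) (c : K) :
    constantCoeff (derivOp K a (monomial b c))
      = if a = b then (∏ j, (b j)! : ℕ) * c else 0 := by
  rw [derivOp_monomial, constantCoeff_monomial]
  by_cases hab : a = b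
  · simp [hab, Nat.descFactorial_self]
  · rw [if_neg hab]
    split_ifs with hle
    · obtain ⟨j, hj⟩ : ∃ j, b j < a j := by
        by_contra! h
        exact hab (le_antisymm (Finsupp.le_def.mpr h) (tsub_eq_zero_iff_le.mp hle))
      rw [Finset.prod_eq_zero (Finset.mem_univ j) (Nat.descFactorial_eq_zero_iff_lt.mpr hj),
        Nat.cast_zero, zero_mul]
    · rfl

lemma apolS_monomial_right (u : MvPolynomial σ K) (b : σ →₀ ℕ) (c : K) :
    apolS u (monomial b c) = (∏ j, (b j)! : ℕ) * coeff b u * c := by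
  simp only [apolS, apol, map_sum, constantCoeff_smul, constantCoeff_derivOp_monomial, smul_eq_mul,
    mul_ite, mul_zero, Finset.sum_ite_eq']
  split_ifs with hb
  · ring
  · rw [notMem_support_iff.mp hb, mul_zero, zero_mul]

lemma apolS_sum {ι : Type*} (u : MvPolynomial σ K) (s : Finset ι) (g : ι → MvPolynomial σ K) :
    apolS u (∑ i ∈ s, g i) = ∑ i ∈ s, apolS u (g i) := by
  simp only [apolS, apol, map_sum, Finset.smul_sum]
  exact Finset.sum_comm

end Apolarity

lemma Nat.cast_factorial_ne_zero_of_le {K : Type*} [Field K] {N m : ℕ}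
    (h : ∀ i : ℕ, 0 < i → i ≤ N → (i : K) ≠ 0) (hm : m ≤ N) : (m ! : K) ≠ 0 := by
  rw [← Finset.prod_range_add_one_eq_factorial, Nat.cast_prod]
  exact Finset.prod_ne_zero_iff.mpr fun i hi =>
    h (i + 1) i.succ_pos (by simp at hi; omega)

section MonomialBasis

variable {K : Type*} [Field K] {m d k : ℕ}

lemma prod_X_pow_eq_monomial_equivFunOnFinite (g : Fin m → ℕ) :
    ∏ i, (X i : MvPolynomial (Fin m) K) ^ g i = monomial (Finsupp.equivFunOnFinite.symm g) 1 := by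
  simp [monomial_eq, Finsupp.prod_fintype]

lemma bstarMon_eq_monomial (v : MonIdx m d) :
    bstarMon K v
      = monomial (Finsupp.equivFunOnFinite.symm v.1) ((∏ j, (v.1 j)! : ℕ) : K)⁻¹ := by
  rw [bstarMon, bmon, smul_monomial, smul_eq_mul, mul_one]

lemma factorial_smul_sum_bstarMon (hd : (d ! : K) ≠ 0) :
    (d ! : K) • ∑ v : MonIdx m d, bstarMon K v = (∑ i, X i : MvPolynomial (Fin m) K) ^ d := by
  rw [Finset.sum_pow_eq_sum_piAntidiag, Finset.piAntidiag_univ_fin_eq_antidiagonalTuple,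
    Finset.smul_sum, ← Finset.sum_coe_sort (Finset.Nat.antidiagonalTuple m d)]
  refine Fintype.sum_congr _ _ fun v => ?_
  have hspec : ((∏ j, (v.1 j)! : ℕ) : K) * Nat.multinomial Finset.univ v.1 = d ! := by
    have := Nat.multinomial_spec Finset.univ v.1
    rw [Finset.Nat.mem_antidiagonalTuple.mp v.2] at this
    rw [← Nat.cast_mul, this]
  have hv : ((∏ j, (v.1 j)! : ℕ) : K) ≠ 0 := left_ne_zero_of_mul (hspec ▸ hd)
  rw [bstarMon_eq_monomial, prod_X_pow_eq_monomial_equivFunOnFinite, smul_monomial, smul_eq_mul,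
    ← hspec, mul_right_comm, mul_inv_cancel₀ hv, one_mul, ← map_natCast (C : K →+* _),
    C_mul_monomial, mul_one]

lemma factorial_mul_coeff_sum_prod_bstarMon (hd : (d ! : K) ≠ 0) (b : Fin m →₀ ℕ)
    (hb : b.degree = k * d) :
    ((∏ j, (b j)! : ℕ) : K) * coeff b (∑ t : Fin k → MonIdx m d, ∏ l, bstarMon K (t l))
      = (k * d)! / d ! ^ k := by
  have hpow : (d ! : K) ^ k • ∑ t : Fin k → MonIdx m d, ∏ l, bstarMon K (t l)
      = (∑ i, X i) ^ (k * d) := by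
    rw [← Fintype.prod_sum, Fin.prod_const, ← smul_pow, factorial_smul_sum_bstarMon hd,
      ← pow_mul, mul_comm]
  have hcoeff := congrArg (coeff b) hpow
  have hb' : b.sum (fun _ e ↦ e) = k * d := hb
  rw [coeff_smul, coeff_sum_X_pow_of_fintype, if_pos hb', smul_eq_mul] at hcoeff
  have hspec : ((∏ j, (b j)! : ℕ) : K) * b.multinomial = (k * d)! := by
    rw [Finsupp.multinomial_eq_of_support_subset (Finset.subset_univ _), ← Nat.cast_mul,
      Nat.multinomial_spec, ← Finsupp.degree_eq_sum, hb]
  rw [eq_div_iff (pow_ne_zero _ hd), ← hspec, ← hcoeff]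
  ring

lemma prod_bmon (t : Fin k → MonIdx m d) :
    ∏ l, bmon K (t l) = monomial (∑ l, Finsupp.equivFunOnFinite.symm (t l).1) 1 :=
  (monomial_sum_one _ _).symm

lemma prod_bstarMon (t : Fin k → MonIdx m d) :
    ∏ l, bstarMon K (t l) = monomial (∑ l, Finsupp.equivFunOnFinite.symm (t l).1)
      (∏ l, ((∏ j, ((t l).1 j)! : ℕ) : K)⁻¹) := by
  simp only [bstarMon_eq_monomial, monomial_sum_prod]

lemma apolS_prod_bstarMon_smul_prod_bmon (t : Fin k → MonIdx m d) (b : Fin m →₀ ℕ) (c : K) :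
    apolS (∏ l, bstarMon K (t l)) (monomial b c) • ∏ l, bmon K (t l)
      = (((∏ j, (b j)! : ℕ) : K) * coeff b (∏ l, bstarMon K (t l)) * c) • monomial b 1 := by
  rw [apolS_monomial_right, prod_bmon, prod_bstarMon, coeff_monomial]
  split_ifs with h
  · rw [h]
  · simp

lemma taylor_identity_monomial (hd : (d ! : K) ≠ 0) (b : Fin m →₀ ℕ) (hb : b.degree = k * d)
    (c : K) :
    ((k * d)! / d ! ^ k : K) • monomial b c
      = ∑ t : Fin k → MonIdx m d,
          apolS (∏ l, bstarMon K (t l)) (monomial b c) • ∏ l, bmon K (t l) := by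
  simp only [apolS_prod_bstarMon_smul_prod_bmon]
  rw [← Finset.sum_smul, ← Finset.sum_mul, ← Finset.mul_sum, ← coeff_sum,
    factorial_mul_coeff_sum_prod_bstarMon hd b hb]
  simp only [smul_monomial, smul_eq_mul, mul_one]

end MonomialBasis

theorem taylor_identity_monomial_basis_general
    (K : Type*) [Field K] (n d k : ℕ) (hk : 1 ≤ k)
    (hchar : ∀ i : ℕ, 0 < i → i ≤ k * d → (i : K) ≠ 0)
    (f : MvPolynomial (Fin (n + 1)) K) (hf : f.IsHomogeneous (k * d)) :
    ((Nat.factorial (k * d) : K) / (Nat.factorial d : K) ^ k) • f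
      = ∑ t : Fin k → MonIdx (n + 1) d,
          apolS (∏ l, bstarMon K (t l)) f • ∏ l, bmon K (t l) := by
  have hfact : (d ! : K) ≠ 0 :=
    Nat.cast_factorial_ne_zero_of_le hchar (Nat.le_mul_of_pos_left d hk)
  rw [f.as_sum]
  simp only [apolS_sum, Finset.sum_smul, Finset.smul_sum]
  rw [Finset.sum_comm]
  refine Finset.sum_congr rfl fun b hb => taylor_identity_monomial hfact b ?_ _
  by_contra h
  exact mem_support_iff.mp hb (hf.coeff_eq_zero h)

/-- Taylor-like identity for the canonical monomial basis
`b₀,…,b_r` of `Sym^d(W*)` with dual basis `b₀*,…,b_r*`: for every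
`f ∈ Sym^{kd}(W*)`,
`((kd)!/d!^k)·f = ∑_{i₁,…,i_k} D(b_{i₁}*⋯b_{i_k}*, f)·b_{i₁}⋯b_{i_k}`. -/
theorem taylor_identity_monomial_basis
    (K : Type*) [Field K] (n d k : ℕ) (hd : 1 ≤ d) (hk : 1 ≤ k)
    (hchar : ∀ i : ℕ, 0 < i → i ≤ k * d → (i : K) ≠ 0)
    (f : MvPolynomial (Fin (n + 1)) K) (hf : f.IsHomogeneous (k * d)) :
    ((Nat.factorial (k * d) : K) / (Nat.factorial d : K) ^ k) • f
      = ∑ t : Fin k → MonIdx (n + 1) d,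
          apolS (∏ l, bstarMon K (t l)) f • ∏ l, bmon K (t l) :=
  taylor_identity_monomial_basis_general K n d k hk hchar f hf
end
end

section
/- For binary forms q₁,…,q_k ∈ Sym^d(W*), the maps τ satisfy the multiplicativity relation τ_d(q₁)⋯τ_d(q_k) = (d!^k/(kd)!)·τ_{kd}(q₁⋯q_k), where the product on the left is taken in Sym(W). -/
open MvPolynomial

noncomputable section

def bexp (a b : ℕ) : Fin 2 →₀ ℕ := Finsupp.equivFunOnFinite.symm ![a, b]

/-- The linear map `τ_r : Sym^r(W*) → Sym^r(W)` for binary forms, determined by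
`τ_r(x₀^i x₁^j) = r!·(−1)^i·w₀^j w₁^i`. -/
def tauBin (K : Type*) [Field K] (r : ℕ) (P : MvPolynomial (Fin 2) K) :
    MvPolynomial (Fin 2) K :=
  ∑ a ∈ P.support,
    (P.coeff a * (Nat.factorial r : K) * (-1 : K) ^ (a 0)) •
      monomial (bexp (a 1) (a 0)) 1

lemma tauBin_eq (K : Type*) [Field K] (r : ℕ) (P : MvPolynomial (Fin 2) K) :
    tauBin K r P
      = (Nat.factorial r : K) •
          (aeval ![-X 1, X 0] P : MvPolynomial (Fin 2) K) := by
  conv_rhs => rw [P.as_sum]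
  rw [map_sum, Finset.smul_sum, tauBin]
  refine Finset.sum_congr rfl fun a _ => ?_
  rw [aeval_monomial, Finsupp.prod_fintype _ _ (fun i => pow_zero _),
    Fin.prod_univ_two]
  have hmon : (monomial (bexp (a 1) (a 0)) (1 : K))
      = X 0 ^ (a 1) * X 1 ^ (a 0) := by
    rw [monomial_eq, Finsupp.prod_fintype _ _ (fun i => pow_zero _),
      Fin.prod_univ_two]
    simp [bexp]
  rw [hmon]
  simp only [Matrix.cons_val_zero, Matrix.cons_val_one, Matrix.head_cons,
    algebraMap_eq, smul_eq_C_mul, map_mul, map_pow, map_one, map_neg]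
  ring

lemma factorial_ne_zero_of_char (K : Type*) [Field K] (n : ℕ)
    (h : ∀ i : ℕ, 0 < i → i ≤ n → (i : K) ≠ 0) :
    ((Nat.factorial n : ℕ) : K) ≠ 0 := by
  induction n with
  | zero => simp
  | succ m ih =>
    rw [Nat.factorial_succ, Nat.cast_mul]
    exact mul_ne_zero (h (m + 1) (Nat.succ_pos m) le_rfl)
      (ih fun i hi hile => h i hi (hile.trans (Nat.le_succ m)))

/-- multiplicativity of `τ`: for binary forms `q₁,…,q_k ∈ Sym^d(W*)`,
`τ_d(q₁)⋯τ_d(q_k) = (d!^k/(kd)!)·τ_{kd}(q₁⋯q_k)` in `Sym(W)`. -/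
theorem tau_multiplicativity
    (K : Type*) [Field K] (d k : ℕ) (hd : 1 ≤ d) (hk : 1 ≤ k)
    (hchar : ∀ i : ℕ, 0 < i → i ≤ k * d → (i : K) ≠ 0)
    (q : Fin k → MvPolynomial (Fin 2) K) (hq : ∀ i, (q i).IsHomogeneous d) :
    ∏ i, tauBin K d (q i)
      = ((Nat.factorial d : K) ^ k / (Nat.factorial (k * d) : K)) •
          tauBin K (k * d) (∏ i, q i) := by
  have hfac : ((Nat.factorial (k * d) : ℕ) : K) ≠ 0 :=
    factorial_ne_zero_of_char K (k * d) hchar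
  simp only [tauBin_eq, map_prod, smul_smul]
  rw [Finset.prod_congr rfl (fun i _ => smul_eq_C_mul _ _),
    Finset.prod_mul_distrib, ← map_prod, Finset.prod_const, Finset.card_univ,
    Fintype.card_fin, ← smul_eq_C_mul]
  congr 1
  field_simp

end
end
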